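/- arXiv:2509.06614 — 6 statements merged into one kernel-verified Lean document; each statement's English description precedes it below -/
import Mathlib

section
/- For every depth d, every family of leaves ℓ : Fin (2^d) → α and every index i : Fin (2^d), the canonical sibling-path proof for i (the vector whose k-th entry is the Merkle root of the 2^k-block of leaves that is the sibling, at height k, of the block containing i) verifies the element ℓ i at position i against the root mroot d ℓ. (Honest-prover completeness direction of the membership fraud-proof game, Proposition 2.) -/
variable {α β : Type*}

/-- First half of a family of `2^(d+1)` leaves. -/
def half0 {d : ℕ} (ℓ : Fin (2 ^ (d + 1)) → α) : Fin (2 ^ d) → α :=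
  fun i => ℓ ⟨i.val, by
    have hi := i.isLt
    have h2 : 2 ^ (d + 1) = 2 ^ d + 2 ^ d := by rw [pow_succ]; ring
    omega⟩

/-- Second half of a family of `2^(d+1)` leaves. -/
def half1 {d : ℕ} (ℓ : Fin (2 ^ (d + 1)) → α) : Fin (2 ^ d) → α :=
  fun i => ℓ ⟨2 ^ d + i.val, by
    have hi := i.isLt
    have h2 : 2 ^ (d + 1) = 2 ^ d + 2 ^ d := by rw [pow_succ]; ring
    omega⟩

/-- Merkle root of a family of `2^d` leaves, with leaf hash `h` and node combiner `H`. -/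
def mroot (h : α → β) (H : β → β → β) : (d : ℕ) → (Fin (2 ^ d) → α) → β
  | 0, ℓ => h (ℓ ⟨0, by positivity⟩)
  | d + 1, ℓ => H (mroot h H d (half0 ℓ)) (mroot h H d (half1 ℓ))

/-- Verification fold of a membership proof `π` (a vector of `d` hashes) for element `e`
at position `i`: `v 0 = h e`, and `v (k+1) = H (π k) (v k)` if the `k`-th bit of `i` is 1,
else `v (k+1) = H (v k) (π k)`. -/
def vfold (h : α → β) (H : β → β → β) (e : α) (i : ℕ) {d : ℕ} (π : Fin d → β) : ℕ → β
  | 0 => h e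
  | k + 1 =>
    if hk : k < d then
      if i.testBit k then H (π ⟨k, hk⟩) (vfold h H e i π k)
      else H (vfold h H e i π k) (π ⟨k, hk⟩)
    else vfold h H e i π k

/-- The membership proof `π` verifies element `e` at position `i` against root `r`. -/
def Verifies (h : α → β) (H : β → β → β) {d : ℕ} (π : Fin d → β) (e : α)
    (i : Fin (2 ^ d)) (r : β) : Prop :=
  vfold h H e i.val π d = r

/-- The `2^k`-block of leaves with block index `b`: leaves `b·2^k, …, b·2^k + 2^k - 1`. -/
def blockAt {d : ℕ} (ℓ : Fin (2 ^ d) → α) (k b : ℕ) (hb : (b + 1) * 2 ^ k ≤ 2 ^ d) :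
    Fin (2 ^ k) → α :=
  fun j => ℓ ⟨b * 2 ^ k + j.val, by
    have hj := j.isLt
    have h1 : (b + 1) * 2 ^ k = b * 2 ^ k + 2 ^ k := by ring
    omega⟩

/-- Index of the sibling block of block `b` (flip the lowest bit). -/
def sibIndex (b : ℕ) : ℕ := if b % 2 = 0 then b + 1 else b - 1

/-- Canonical sibling-path proof for position `i`: the `k`-th entry is the Merkle root of
the `2^k`-block of leaves that is the sibling, at height `k`, of the block containing `i`. -/
def sibPath (h : α → β) (H : β → β → β) {d : ℕ} (ℓ : Fin (2 ^ d) → α) (i : Fin (2 ^ d)) :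
    Fin d → β :=
  fun k => mroot h H k.val (blockAt ℓ k.val (sibIndex (i.val / 2 ^ k.val)) (by
    have hk := k.isLt
    have hi := i.isLt
    have hd : 2 ^ d = 2 ^ (d - k.val) * 2 ^ k.val := by rw [← pow_add]; congr 1; omega
    have hq : i.val / 2 ^ k.val < 2 ^ (d - k.val) :=
      Nat.div_lt_of_lt_mul (by rw [mul_comm, ← hd]; exact hi)
    have hpow : 2 ≤ 2 ^ (d - k.val) := by
      calc 2 = 2 ^ 1 := (pow_one 2).symm
      _ ≤ 2 ^ (d - k.val) := Nat.pow_le_pow_right (by norm_num) (by omega)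
    have heven : 2 ^ (d - k.val) % 2 = 0 := by
      have : 2 ^ (d - k.val) = 2 * 2 ^ (d - k.val - 1) := by
        rw [← pow_succ']; congr 1; omega
      omega
    have hs : sibIndex (i.val / 2 ^ k.val) < 2 ^ (d - k.val) := by
      unfold sibIndex
      split <;> omega
    calc (sibIndex (i.val / 2 ^ k.val) + 1) * 2 ^ k.val
        ≤ 2 ^ (d - k.val) * 2 ^ k.val := Nat.mul_le_mul_right _ (by omega)
      _ = 2 ^ d := hd.symm))


lemma blockAt_half0 {d : ℕ} (ℓ : Fin (2 ^ d) → α) (k b : ℕ)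
    (hb : (b + 1) * 2 ^ (k + 1) ≤ 2 ^ d) (hb2 : (2 * b + 1) * 2 ^ k ≤ 2 ^ d) :
    half0 (blockAt ℓ (k + 1) b hb) = blockAt ℓ k (2 * b) hb2 := by
  funext j
  simp only [half0, blockAt]
  congr 1
  apply Fin.ext
  show b * 2 ^ (k + 1) + j.val = 2 * b * 2 ^ k + j.val
  rw [pow_succ]; ring

lemma blockAt_half1 {d : ℕ} (ℓ : Fin (2 ^ d) → α) (k b : ℕ)
    (hb : (b + 1) * 2 ^ (k + 1) ≤ 2 ^ d) (hb2 : (2 * b + 1 + 1) * 2 ^ k ≤ 2 ^ d) :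
    half1 (blockAt ℓ (k + 1) b hb) = blockAt ℓ k (2 * b + 1) hb2 := by
  funext j
  simp only [half1, blockAt]
  congr 1
  apply Fin.ext
  show b * 2 ^ (k + 1) + (2 ^ k + j.val) = (2 * b + 1) * 2 ^ k + j.val
  rw [pow_succ]; ring

lemma mroot_split (h : α → β) (H : β → β → β) {d : ℕ} (ℓ : Fin (2 ^ d) → α) (k b : ℕ)
    (hb : (b + 1) * 2 ^ (k + 1) ≤ 2 ^ d) (hb0 : (2 * b + 1) * 2 ^ k ≤ 2 ^ d)
    (hb1 : (2 * b + 1 + 1) * 2 ^ k ≤ 2 ^ d) :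
    mroot h H (k + 1) (blockAt ℓ (k + 1) b hb)
      = H (mroot h H k (blockAt ℓ k (2 * b) hb0))
          (mroot h H k (blockAt ℓ k (2 * b + 1) hb1)) := by
  simp only [mroot]
  rw [blockAt_half0 ℓ k b hb hb0, blockAt_half1 ℓ k b hb hb1]

lemma blockAt_congr {d : ℕ} (ℓ : Fin (2 ^ d) → α) (k : ℕ) {b b' : ℕ} (e : b = b')
    (hb : (b + 1) * 2 ^ k ≤ 2 ^ d) (hb' : (b' + 1) * 2 ^ k ≤ 2 ^ d) :
    blockAt ℓ k b hb = blockAt ℓ k b' hb' := by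
  subst e; rfl

lemma vfold_key (h : α → β) (H : β → β → β) {d : ℕ} (ℓ : Fin (2 ^ d) → α)
    (i : Fin (2 ^ d)) :
    ∀ k, k ≤ d → ∀ (hb : (i.val / 2 ^ k + 1) * 2 ^ k ≤ 2 ^ d),
      vfold h H (ℓ i) i.val (sibPath h H ℓ i) k
        = mroot h H k (blockAt ℓ k (i.val / 2 ^ k) hb) := by
  intro k
  induction k with
  | zero =>
    intro _ hb
    show h (ℓ i) = h (blockAt ℓ 0 (i.val / 2 ^ 0) hb ⟨0, by positivity⟩)
    simp only [blockAt]
    congr 1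
    congr 1
    apply Fin.ext
    simp
  | succ k ih =>
    intro hk hb
    have hk' : k < d := by omega
    have hdiv : i.val / 2 ^ (k + 1) = i.val / 2 ^ k / 2 := by
      rw [Nat.div_div_eq_div_mul, pow_succ]
    set b := i.val / 2 ^ k with hbdef
    set q := i.val / 2 ^ (k + 1) with hqdef
    have hq1 : (q + 1) * 2 ^ (k + 1) ≤ 2 ^ d := hb
    have h2q : 2 * q ≤ b ∧ b ≤ 2 * q + 1 := by omega
    have hbnd : (b + 1) * 2 ^ k ≤ 2 ^ d := by
      have h3 : b + 1 ≤ (q + 1) * 2 := by omega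
      calc (b + 1) * 2 ^ k ≤ ((q + 1) * 2) * 2 ^ k := Nat.mul_le_mul_right _ h3
        _ = (q + 1) * 2 ^ (k + 1) := by rw [pow_succ]; ring
        _ ≤ 2 ^ d := hq1
    have hb0 : (2 * q + 1) * 2 ^ k ≤ 2 ^ d := by
      calc (2 * q + 1) * 2 ^ k ≤ ((q + 1) * 2) * 2 ^ k :=
            Nat.mul_le_mul_right _ (by omega)
        _ = (q + 1) * 2 ^ (k + 1) := by rw [pow_succ]; ring
        _ ≤ 2 ^ d := hq1
    have hb1 : (2 * q + 1 + 1) * 2 ^ k ≤ 2 ^ d := by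
      calc (2 * q + 1 + 1) * 2 ^ k = ((q + 1) * 2) * 2 ^ k := by ring
        _ = (q + 1) * 2 ^ (k + 1) := by rw [pow_succ]; ring
        _ ≤ 2 ^ d := hq1
    have hsibbnd : (sibIndex b + 1) * 2 ^ k ≤ 2 ^ d := by
      unfold sibIndex
      split
      · calc (b + 1 + 1) * 2 ^ k ≤ (2 * q + 1 + 1) * 2 ^ k :=
              Nat.mul_le_mul_right _ (by omega)
          _ ≤ 2 ^ d := hb1
      · calc (b - 1 + 1) * 2 ^ k ≤ (b + 1) * 2 ^ k :=
              Nat.mul_le_mul_right _ (by omega)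
          _ ≤ 2 ^ d := hbnd
    have htb : i.val.testBit k = decide (b % 2 = 1) := by
      rw [Nat.testBit, Nat.shiftRight_eq_div_pow, ← hbdef]
      rcases Nat.mod_two_eq_zero_or_one b with h0 | h1
      · simp [Nat.and_one_is_mod, h0]
      · simp [Nat.and_one_is_mod, h1]
    have hsib : sibPath h H ℓ i ⟨k, hk'⟩
        = mroot h H k (blockAt ℓ k (sibIndex b) hsibbnd) := by
      simp only [sibPath]
      rfl
    rw [mroot_split h H ℓ k q hb hb0 hb1]
    simp only [vfold]
    rw [dif_pos hk']
    rcases Nat.mod_two_eq_zero_or_one b with h0 | h1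
    · have hcond : i.val.testBit k = false := by rw [htb]; simp [h0]
      rw [hcond]
      simp only [Bool.false_eq_true, if_false]
      rw [ih (by omega) hbnd, hsib]
      have hs : sibIndex b = b + 1 := by unfold sibIndex; simp [h0]
      congr 1
      · exact congrArg (mroot h H k) (blockAt_congr ℓ k (by omega) _ _)
      · exact congrArg (mroot h H k) (blockAt_congr ℓ k (by omega) _ _)
    · have hcond : i.val.testBit k = true := by rw [htb]; simp [h1]
      rw [hcond]
      simp only [if_true]
      rw [ih (by omega) hbnd, hsib]
      have hs : sibIndex b = b - 1 := by unfold sibIndex; simp [h1]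
      congr 1
      · exact congrArg (mroot h H k) (blockAt_congr ℓ k (by omega) _ _)
      · exact congrArg (mroot h H k) (blockAt_congr ℓ k (by omega) _ _)

/-- Honest-prover completeness of the membership fraud-proof game (Proposition 2):
the canonical sibling-path proof for `i` verifies the element `ℓ i` at position `i`
against the root `mroot d ℓ`. -/
theorem sibPath_verifies (h : α → β) (H : β → β → β) (d : ℕ) (ℓ : Fin (2 ^ d) → α)
    (i : Fin (2 ^ d)) :
    Verifies h H (sibPath h H ℓ i) (ℓ i) i (mroot h H d ℓ) := by
  have hz : i.val / 2 ^ d = 0 := Nat.div_eq_of_lt i.isLt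
  have hb : (i.val / 2 ^ d + 1) * 2 ^ d ≤ 2 ^ d := by rw [hz]; simp
  unfold Verifies
  rw [vfold_key h H ℓ i d le_rfl hb]
  congr 1
  funext j
  simp only [blockAt, hz]
  congr 1
  apply Fin.ext
  simp
end

section
/- Assume the leaf-hash h : α → β is injective and the node combiner H : β → β → β is injective as a function on pairs. If some membership proof π verifies an element e at position i against the root mroot d ℓ, then e = ℓ i. (Soundness of Merkle membership proofs; this is the honest-challenger direction of Proposition 2: a dishonest prover cannot win the membership fraud-proof for a wrong element.) -/
variable {α β : Type*}

/-! The verification fold of a proof for position `i` runs along the path from leaf `i` to the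
root, and its last step is decided by the top bit of `i`, i.e. by the half of the tree containing
leaf `i`. Injectivity of `H` splits an equality with the root into equalities with the two
subtree roots, and injectivity of `h` closes the argument at the leaf. Working with an arbitrary
natural number `i` and the leaf `i % 2 ^ d` keeps the induction free of bounds. -/

lemma Nat.mod_two_pow_succ_eq (i d : ℕ) :
    i % 2 ^ (d + 1) = (if i.testBit d then 2 ^ d else 0) + i % 2 ^ d := by
  rw [Nat.mod_pow_succ, Nat.testBit_eq_decide_div_mod_eq]
  rcases Nat.mod_two_eq_zero_or_one (i / 2 ^ d) with hbit | hbit <;> simp [hbit, add_comm]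

section Verification

variable (h : α → β) (H : β → β → β) (e : α) (i : ℕ)

lemma vfold_init {d : ℕ} (π : Fin (d + 1) → β) {k : ℕ} (hk : k ≤ d) :
    vfold h H e i π k = vfold h H e i (Fin.init π) k := by
  induction k with
  | zero => rfl
  | succ k ih =>
    simp only [vfold, dif_pos (show k < d + 1 by omega), dif_pos (show k < d by omega),
      ih (by omega)]
    rfl

lemma vfold_succ_last {d : ℕ} (π : Fin (d + 1) → β) :
    vfold h H e i π (d + 1) =
      if i.testBit d then H (π (Fin.last d)) (vfold h H e i (Fin.init π) d)
      else H (vfold h H e i (Fin.init π) d) (π (Fin.last d)) := by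
  rw [vfold, dif_pos d.lt_succ_self, vfold_init h H e i π le_rfl]
  rfl

variable {h H}

theorem eq_of_vfold_eq_mroot (hinj : Function.Injective h)
    (Hinj : Function.Injective fun p : β × β => H p.1 p.2) :
    ∀ {d : ℕ} (ℓ : Fin (2 ^ d) → α) (π : Fin d → β),
      vfold h H e i π d = mroot h H d ℓ → e = ℓ ⟨i % 2 ^ d, Nat.mod_lt _ (by positivity)⟩
  | 0, ℓ, _, hv => (hinj hv).trans (congrArg ℓ (Fin.ext (Nat.mod_one i).symm))
  | d + 1, ℓ, π, hv => by
    have hpair (a b a' b' : β) (hab : H a b = H a' b') : a = a' ∧ b = b' :=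
      Prod.ext_iff.mp (Hinj (a₁ := (a, b)) (a₂ := (a', b')) hab)
    rw [vfold_succ_last, mroot] at hv
    have hmod := Nat.mod_two_pow_succ_eq i d
    by_cases hbit : i.testBit d
    · rw [if_pos hbit] at hv hmod
      rw [eq_of_vfold_eq_mroot hinj Hinj (half1 ℓ) (Fin.init π) (hpair _ _ _ _ hv).2]
      simp only [half1, ← hmod]
    · rw [if_neg hbit] at hv hmod
      rw [eq_of_vfold_eq_mroot hinj Hinj (half0 ℓ) (Fin.init π) (hpair _ _ _ _ hv).1]
      simp only [half0, hmod, zero_add]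

end Verification

/-- Soundness of Merkle membership proofs (honest-challenger direction of Proposition 2):
if `h` and `H` are injective and some membership proof verifies `e` at position `i`
against `mroot d ℓ`, then `e = ℓ i`. -/
theorem membership_sound (h : α → β) (H : β → β → β)
    (hinj : Function.Injective h)
    (Hinj : Function.Injective fun p : β × β => H p.1 p.2)
    {d : ℕ} (ℓ : Fin (2 ^ d) → α) (π : Fin d → β) (e : α) (i : Fin (2 ^ d))
    (hv : Verifies h H π e i (mroot h H d ℓ)) :
    e = ℓ i := by
  rw [eq_of_vfold_eq_mroot e i.val hinj Hinj ℓ π hv]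
  simp only [Nat.mod_eq_of_lt i.isLt]
end

section
/- If some membership proof π verifies an element e at position i against the root mroot d ℓ, but e ≠ ℓ i, then there exists a collision: either a pair x ≠ y with h x = h y, or a pair of pairs (a,b) ≠ (c,d) with H a b = H c d. (Constructive soundness: a verifying proof for a wrong element yields an explicit hash collision, matching the paper's collision-resistance argument.) -/
variable {α β : Type*}

/-! A verifying proof for `e` at position `i` and the tree for `ℓ` are hashed along the same path:
comparing them from the root downwards, either some node is the image under `H` of two different
pairs, or the leaf hashes `h e` and `h (ℓ i)` coincide. Equivalently, if `h` and `H` are both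
injective then every verifying proof is for the leaf actually stored at its position. -/

section VerificationFold

variable (h : α → β) (H : β → β → β) (e : α)

lemma vfold_succ_of_lt (i : ℕ) {d : ℕ} (π : Fin d → β) {k : ℕ} (hk : k < d) :
    vfold h H e i π (k + 1) =
      if i.testBit k then H (π ⟨k, hk⟩) (vfold h H e i π k)
      else H (vfold h H e i π k) (π ⟨k, hk⟩) := by
  rw [vfold, dif_pos hk]

lemma vfold_castSucc {d : ℕ} (π : Fin (d + 1) → β) {i i' : ℕ}
    (hbit : ∀ k < d, i.testBit k = i'.testBit k) {k : ℕ} (hk : k ≤ d) :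
    vfold h H e i π k = vfold h H e i' (fun j : Fin d => π j.castSucc) k := by
  induction k with
  | zero => rfl
  | succ k ih =>
    rw [vfold_succ_of_lt h H e i π (by omega), vfold_succ_of_lt h H e i' _ hk,
      hbit k hk, ih (by omega)]
    rfl

end VerificationFold

section Halves

variable {d : ℕ}

def Fin.indexInHalf (i : Fin (2 ^ (d + 1))) : Fin (2 ^ d) :=
  ⟨i.val % 2 ^ d, Nat.mod_lt _ (by positivity)⟩

lemma Fin.val_eq_indexInHalf_add (i : Fin (2 ^ (d + 1))) :
    i.val = i.indexInHalf.val + 2 ^ d * (i.val.testBit d).toNat := by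
  rw [Fin.indexInHalf, Nat.toNat_testBit, ← Nat.mod_pow_succ, Nat.mod_eq_of_lt i.isLt]

lemma Fin.testBit_indexInHalf (i : Fin (2 ^ (d + 1))) {k : ℕ} (hk : k < d) :
    i.val.testBit k = i.indexInHalf.val.testBit k := by
  simp [Fin.indexInHalf, Nat.testBit_mod_two_pow, hk]

variable (ℓ : Fin (2 ^ (d + 1)) → α) {i : Fin (2 ^ (d + 1))}

lemma half0_indexInHalf (hb : i.val.testBit d = false) : half0 ℓ i.indexInHalf = ℓ i := by
  have hi := i.val_eq_indexInHalf_add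
  rw [hb, Bool.toNat_false, mul_zero, add_zero] at hi
  exact congrArg ℓ (Fin.ext hi.symm)

lemma half1_indexInHalf (hb : i.val.testBit d = true) : half1 ℓ i.indexInHalf = ℓ i := by
  have hi := i.val_eq_indexInHalf_add
  rw [hb, Bool.toNat_true, mul_one] at hi
  exact congrArg ℓ (Fin.ext (by simp only; omega))

end Halves

theorem eq_of_verifies_mroot {h : α → β} {H : β → β → β}
    (hh : Function.Injective h) (hH : Function.Injective (Function.uncurry H))
    {d : ℕ} (ℓ : Fin (2 ^ d) → α) (π : Fin d → β) (e : α) (i : Fin (2 ^ d))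
    (hv : Verifies h H π e i (mroot h H d ℓ)) : e = ℓ i := by
  induction d with
  | zero =>
    obtain rfl : i = ⟨0, by positivity⟩ := Fin.ext (by have := i.isLt; omega)
    exact hh hv
  | succ d ih =>
    set π' : Fin d → β := fun j => π j.castSucc
    have hprefix : vfold h H e i.val π d = vfold h H e i.indexInHalf.val π' d :=
      vfold_castSucc h H e π (fun k hk => i.testBit_indexInHalf hk) le_rfl
    unfold Verifies mroot at hv
    rw [vfold_succ_of_lt h H e _ π (Nat.lt_succ_self d), hprefix] at hv
    cases hb : i.val.testBit d <;> rw [hb] at hv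
    · have hpair := Prod.ext_iff.mp (@hH (_, _) (_, _) hv)
      rw [← half0_indexInHalf ℓ hb]
      exact ih (half0 ℓ) π' i.indexInHalf hpair.1
    · have hpair := Prod.ext_iff.mp (@hH (_, _) (_, _) hv)
      rw [← half1_indexInHalf ℓ hb]
      exact ih (half1 ℓ) π' i.indexInHalf hpair.2

/-- Constructive soundness: a membership proof verifying a wrong element against the
Merkle root yields an explicit collision of `h` or of `H`. -/
theorem membership_collision (h : α → β) (H : β → β → β)
    {d : ℕ} (ℓ : Fin (2 ^ d) → α) (π : Fin d → β) (e : α) (i : Fin (2 ^ d))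
    (hv : Verifies h H π e i (mroot h H d ℓ)) (hne : e ≠ ℓ i) :
    (∃ x y : α, x ≠ y ∧ h x = h y) ∨
    (∃ a b c d' : β, (a, b) ≠ (c, d') ∧ H a b = H c d') := by
  by_cases hh : Function.Injective h
  · by_cases hH : Function.Injective (Function.uncurry H)
    · exact absurd (eq_of_verifies_mroot hh hH ℓ π e i hv) hne
    · obtain ⟨⟨a, b⟩, ⟨c, d'⟩, heq, hne'⟩ := Function.not_injective_iff.mp hH
      exact Or.inr ⟨a, b, c, d', hne', heq⟩
  · obtain ⟨x, y, heq, hxy⟩ := Function.not_injective_iff.mp hh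
    exact Or.inl ⟨x, y, hxy, heq⟩
end

section
/- For every depth d and leaf families ℓ ℓ' : Fin (2^d) → α with ℓ ≠ ℓ', if mroot d ℓ = mroot d ℓ', then there exists a collision: either a pair x ≠ y with h x = h y, or a pair of pairs (a,b) ≠ (c,d) with H a b = H c d. (Constructive form: two distinct batches with the same Merkle root yield an explicit hash collision.) -/
variable {α β : Type*}

/-! A collision-free `h` and `H` make every `mroot h H d` injective, by induction on the depth:
equal roots force equal pairs of subtree roots, hence equal halves, hence equal leaves. -/

open Function

theorem eq_of_half0_eq_of_half1_eq {d : ℕ} {ℓ ℓ' : Fin (2 ^ (d + 1)) → α}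
    (h0 : half0 ℓ = half0 ℓ') (h1 : half1 ℓ = half1 ℓ') : ℓ = ℓ' := by
  funext ⟨i, hi⟩
  have hpow : 2 ^ (d + 1) = 2 ^ d + 2 ^ d := by rw [pow_succ, mul_two]
  rcases lt_or_ge i (2 ^ d) with hlow | hhigh
  · exact congrFun h0 ⟨i, hlow⟩
  · obtain ⟨j, rfl⟩ := Nat.exists_eq_add_of_le hhigh
    exact congrFun h1 ⟨j, by omega⟩

theorem mroot_injective {h : α → β} {H : β → β → β} (hh : Injective h)
    (hH : Injective (uncurry H)) : ∀ d, Injective (mroot h H d)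
  | 0, ℓ, ℓ', hroot => by
    funext i
    rw [show i = ⟨0, by positivity⟩ from Fin.ext (Nat.lt_one_iff.mp i.isLt)]
    exact hh hroot
  | d + 1, ℓ, ℓ', hroot => by
    obtain ⟨h0, h1⟩ := Prod.ext_iff.mp (@hH (_, _) (_, _) hroot)
    exact eq_of_half0_eq_of_half1_eq (mroot_injective hh hH d h0) (mroot_injective hh hH d h1)

/-- Constructive form: two distinct batches with the same Merkle root yield an explicit
collision of `h` or of `H`. -/
theorem mroot_collision (h : α → β) (H : β → β → β)
    (d : ℕ) (ℓ ℓ' : Fin (2 ^ d) → α) (hne : ℓ ≠ ℓ')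
    (hroot : mroot h H d ℓ = mroot h H d ℓ') :
    (∃ x y : α, x ≠ y ∧ h x = h y) ∨
    (∃ a b c d' : β, (a, b) ≠ (c, d') ∧ H a b = H c d') := by
  by_contra! hfree
  obtain ⟨hh, hH⟩ := hfree
  have h_inj : Injective h := fun x y => not_imp_not.mp (hh x y)
  have H_inj : Injective (uncurry H) := fun ⟨a, b⟩ ⟨c, d'⟩ => not_imp_not.mp (hH a b c d')
  exact hne (mroot_injective h_inj H_inj d hroot)
end

section
/- Let validTr : α → Prop be a decidable predicate (validity of transaction requests), d : ℕ, ℓ : Fin (2^d) → α a batch of elements, and r : β a claimed root. If localValid(ℓ, r) fails, then at least one of the following explicit pieces of fraud evidence exists: (1) mroot d ℓ ≠ r; or (2) there is an index i and a membership proof verifying the element ℓ i at position i against mroot d ℓ, where ℓ i is not a valid transaction request; or (3) there are indices i ≠ j with ℓ i = ℓ j, together with two membership proofs verifying this common element at positions i and j against mroot d ℓ. (Evidence form of the LEAN theorem 'Only Valid DAs' combined with Proposition 3: an honest challenger who knows the batch can always exhibit a winning fraud-proof against a locally invalid disputable assertion.) -/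
variable {α β : Type*}

/-- A batch `ℓ` with claimed root `r` is locally valid: the Merkle root matches `r`,
every element is a valid transaction request, and there are no duplicates. -/
def LocalValid (h : α → β) (H : β → β → β) (validTr : α → Prop) {d : ℕ}
    (ℓ : Fin (2 ^ d) → α) (r : β) : Prop :=
  mroot h H d ℓ = r ∧ (∀ i, validTr (ℓ i)) ∧ Function.Injective ℓ

lemma testBit_two_pow_add {d m j : ℕ} (hm : m < d) (hj : j < 2 ^ d) :
    (2 ^ d + j).testBit m = j.testBit m := by
  rw [Nat.testBit_eq_decide_div_mod_eq, Nat.testBit_eq_decide_div_mod_eq]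
  have hdm : 2 ^ d = 2 ^ (d - m) * 2 ^ m := by
    rw [← pow_add]; congr 1; omega
  have hpos : 0 < 2 ^ m := Nat.pow_pos (n := m) (by norm_num)
  have hdiv : (2 ^ d + j) / 2 ^ m = 2 ^ (d - m) + j / 2 ^ m := by
    rw [hdm, add_comm, mul_comm, Nat.add_mul_div_left _ _ hpos, add_comm]
  rw [hdiv]
  have heven : 2 ^ (d - m) % 2 = 0 := by
    have hne : d - m ≠ 0 := by omega
    obtain ⟨k, hk⟩ := Nat.exists_eq_succ_of_ne_zero hne
    rw [hk, pow_succ]; omega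
  rw [Nat.add_mod, heven, Nat.zero_add, Nat.mod_mod_of_dvd _ (dvd_refl 2)]

lemma testBit_high {d j : ℕ} (hj : j < 2 ^ d) : (2 ^ d + j).testBit d = true := by
  rw [Nat.testBit_eq_decide_div_mod_eq]
  have hpos : 0 < 2 ^ d := Nat.pow_pos (n := d) (by norm_num)
  have : (2 ^ d + j) / 2 ^ d = 1 := by
    rw [Nat.add_div_left _ hpos] at *
    · rw [Nat.div_eq_of_lt hj]
  rw [this]; simp

lemma vfold_agree (h : α → β) (H : β → β → β) (e : α) {d d' : ℕ}
    (π : Fin d → β) (π' : Fin d' → β) (i i' : ℕ) :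
    ∀ k (hk : k ≤ d) (hk' : k ≤ d'),
      (∀ m (hm : m < k), π ⟨m, by omega⟩ = π' ⟨m, by omega⟩) →
      (∀ m, m < k → i.testBit m = i'.testBit m) →
      vfold h H e i π k = vfold h H e i' π' k := by
  intro k
  induction k with
  | zero => intro _ _ _ _; rfl
  | succ k ih =>
    intro hk hk' hπ hbit
    have hrec := ih (by omega) (by omega)
      (fun m hm => hπ m (by omega)) (fun m hm => hbit m (by omega))
    simp only [vfold, dif_pos (show k < d by omega), dif_pos (show k < d' by omega),
      hbit k (by omega), hrec, hπ k (by omega)]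

lemma exists_proof (h : α → β) (H : β → β → β) :
    ∀ (d : ℕ) (ℓ : Fin (2 ^ d) → α) (i : Fin (2 ^ d)),
      ∃ π : Fin d → β, Verifies h H π (ℓ i) i (mroot h H d ℓ) := by
  intro d
  induction d with
  | zero =>
    intro ℓ i
    refine ⟨Fin.elim0, ?_⟩
    have : i = ⟨0, by norm_num⟩ := by
      have hlt := i.isLt; simp only [pow_zero] at hlt
      exact Fin.ext (by omega)
    subst this
    rfl
  | succ d ih =>
    intro ℓ i
    have h2 : 2 ^ (d + 1) = 2 ^ d + 2 ^ d := by rw [pow_succ]; ring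
    by_cases hi : i.val < 2 ^ d
    · set j : Fin (2 ^ d) := ⟨i.val, hi⟩ with hj
      obtain ⟨π', hπ'⟩ := ih (half0 ℓ) j
      refine ⟨Fin.snoc π' (mroot h H d (half1 ℓ)), ?_⟩
      have hhalf : half0 ℓ j = ℓ i := by
        simp only [half0, hj]
      unfold Verifies
      simp only [vfold, dif_pos (show d < d + 1 by omega),
        Nat.testBit_eq_false_of_lt hi, if_false]
      have hsnoc : (Fin.snoc π' (mroot h H d (half1 ℓ)) : Fin (d+1) → β) ⟨d, by omega⟩
          = mroot h H d (half1 ℓ) := by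
        simp [Fin.snoc]
      rw [hsnoc]
      have hag : vfold h H (ℓ i) i.val (Fin.snoc π' (mroot h H d (half1 ℓ))) d
          = vfold h H (ℓ i) j.val π' d := by
        apply vfold_agree h H (ℓ i) _ _ _ _ d (by omega) le_rfl
        · intro m hm; simp [Fin.snoc, hm]
        · intro m _; rfl
      rw [hag]
      rw [← hhalf] at *
      rw [hπ']
      rfl
    · have hi2 := i.isLt
      set j : Fin (2 ^ d) := ⟨i.val - 2 ^ d, by omega⟩ with hj
      obtain ⟨π', hπ'⟩ := ih (half1 ℓ) j
      refine ⟨Fin.snoc π' (mroot h H d (half0 ℓ)), ?_⟩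
      have hival : i.val = 2 ^ d + j.val := by simp [hj]; omega
      have hhalf : half1 ℓ j = ℓ i := by
        simp only [half1, hj]
        congr 1
        ext; simp; omega
      unfold Verifies
      have htb : i.val.testBit d = true := by
        rw [hival]; exact testBit_high j.isLt
      simp only [vfold, dif_pos (show d < d + 1 by omega), htb, if_true]
      have hsnoc : (Fin.snoc π' (mroot h H d (half0 ℓ)) : Fin (d+1) → β) ⟨d, by omega⟩
          = mroot h H d (half0 ℓ) := by
        simp [Fin.snoc]
      rw [hsnoc]
      have hag : vfold h H (ℓ i) i.val (Fin.snoc π' (mroot h H d (half0 ℓ))) d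
          = vfold h H (ℓ i) j.val π' d := by
        apply vfold_agree h H (ℓ i) _ _ _ _ d (by omega) le_rfl
        · intro m hm; simp [Fin.snoc, hm]
        · intro m hm
          rw [hival]; exact testBit_two_pow_add hm j.isLt
      rw [hag, ← hhalf] at *
      rw [hπ']
      rfl

/-- Evidence form of the LEAN theorem "Only Valid DAs" with Proposition 3: if local
validity fails, explicit fraud evidence exists: a root mismatch, a verified invalid
element, or a verified duplicate. -/
theorem fraud_evidence_of_not_localValid (h : α → β) (H : β → β → β)
    (validTr : α → Prop) [DecidablePred validTr]
    {d : ℕ} (ℓ : Fin (2 ^ d) → α) (r : β)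
    (hnv : ¬ LocalValid h H validTr ℓ r) :
    mroot h H d ℓ ≠ r ∨
    (∃ (i : Fin (2 ^ d)) (π : Fin d → β),
        Verifies h H π (ℓ i) i (mroot h H d ℓ) ∧ ¬ validTr (ℓ i)) ∨
    (∃ i j : Fin (2 ^ d), i ≠ j ∧ ℓ i = ℓ j ∧
        ∃ π π' : Fin d → β,
          Verifies h H π (ℓ i) i (mroot h H d ℓ) ∧
          Verifies h H π' (ℓ i) j (mroot h H d ℓ)) := by
  unfold LocalValid at hnv
  push_neg at hnv
  by_cases hr : mroot h H d ℓ = r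
  · right
    by_cases hv : ∀ i, validTr (ℓ i)
    · right
      have hinj := hnv hr hv
      rw [Function.not_injective_iff] at hinj
      obtain ⟨i, j, hij, hne⟩ := hinj
      obtain ⟨π, hπ⟩ := exists_proof h H d ℓ i
      obtain ⟨π', hπ'⟩ := exists_proof h H d ℓ j
      exact ⟨i, j, hne, hij, π, π', hπ, hij ▸ hπ'⟩
    · left
      push_neg at hv
      obtain ⟨i, hi⟩ := hv
      obtain ⟨π, hπ⟩ := exists_proof h H d ℓ i
      exact ⟨i, π, hπ, hi⟩
  · left; exact hr
end

section
/- Let d, d' : ℕ, and let ℓ : Fin (2^d) → α and ℓ' : Fin (2^{d'}) → α be two batches (the current batch and a previous legal batch respectively). If some element e occurs in both batches, then there exist indices i and j and membership proofs such that one proof verifies e at position i against mroot d ℓ and the other verifies e at position j against mroot d' ℓ'. (Evidence for the Integrity 2 fraud-proof: a violation of the history property — a transaction request of the current batch already appears in a previous batch — can always be exhibited by two verifying Merkle membership proofs against the two posted roots.) -/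
variable {α β : Type*}

/-! Every leaf of a Merkle tree has a membership proof verifying against the root, by induction
on the depth: for position `i` in a tree of depth `d + 1`, bit `d` of `i` selects the half that
contains the leaf, and a proof for position `i % 2 ^ d` in that half, extended by the root of the
other half as the last sibling hash, verifies against the root of the whole tree. Applying this
to both batches gives the two proofs. -/

section

variable (h : α → β) (H : β → β → β) (e : α)

theorem vfold_congr {d d' : ℕ} {π : Fin d → β} {π' : Fin d' → β} {i i' k : ℕ}
    (hk : k ≤ d) (hk' : k ≤ d')
    (hπ : ∀ j (hj : j < k), π ⟨j, by omega⟩ = π' ⟨j, by omega⟩)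
    (hi : ∀ j < k, i.testBit j = i'.testBit j) :
    vfold h H e i π k = vfold h H e i' π' k := by
  induction k with
  | zero => rfl
  | succ k ih =>
    have hkd : k < d := by omega
    have hkd' : k < d' := by omega
    simp only [vfold, dif_pos hkd, dif_pos hkd', hi k k.lt_succ_self, hπ k k.lt_succ_self,
      ih (by omega) (by omega) (fun j hj => hπ j (by omega)) (fun j hj => hi j (by omega))]

theorem vfold_snoc {d : ℕ} (π : Fin d → β) (x : β) (i : ℕ) :
    vfold h H e i (Fin.snoc π x : Fin (d + 1) → β) (d + 1) =
      if i.testBit d then H x (vfold h H e (i % 2 ^ d) π d)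
      else H (vfold h H e (i % 2 ^ d) π d) x := by
  have hlow : vfold h H e i (Fin.snoc π x : Fin (d + 1) → β) d = vfold h H e (i % 2 ^ d) π d :=
    vfold_congr h H e d.le_succ le_rfl
      (fun j hj => Fin.snoc_castSucc (α := fun _ => β) (i := ⟨j, hj⟩) x π)
      (fun j hj => by simp [Nat.testBit_mod_two_pow, hj])
  have hlast : (Fin.snoc π x : Fin (d + 1) → β) ⟨d, d.lt_succ_self⟩ = x :=
    Fin.snoc_last (α := fun _ => β) x π
  rw [vfold, dif_pos d.lt_succ_self, hlow, hlast]

def halfIndex {d : ℕ} (i : Fin (2 ^ (d + 1))) : Fin (2 ^ d) :=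
  ⟨i.val % 2 ^ d, Nat.mod_lt _ (Nat.two_pow_pos d)⟩

theorem halfIndex_val_add_testBit {d : ℕ} (i : Fin (2 ^ (d + 1))) :
    (halfIndex i).val + 2 ^ d * (i.val.testBit d).toNat = i.val := by
  rw [Nat.toNat_testBit, halfIndex, ← Nat.mod_pow_succ, Nat.mod_eq_of_lt i.isLt]

theorem half0_halfIndex {d : ℕ} (ℓ : Fin (2 ^ (d + 1)) → α) (i : Fin (2 ^ (d + 1)))
    (hi : i.val.testBit d = false) : half0 ℓ (halfIndex i) = ℓ i :=
  congrArg ℓ (Fin.ext (by simpa [hi] using halfIndex_val_add_testBit i))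

theorem half1_halfIndex {d : ℕ} (ℓ : Fin (2 ^ (d + 1)) → α) (i : Fin (2 ^ (d + 1)))
    (hi : i.val.testBit d = true) : half1 ℓ (halfIndex i) = ℓ i :=
  congrArg ℓ (Fin.ext (by simpa [hi, add_comm] using halfIndex_val_add_testBit i))

theorem exists_verifies_mroot :
    ∀ (d : ℕ) (ℓ : Fin (2 ^ d) → α) (i : Fin (2 ^ d)),
      ∃ π : Fin d → β, Verifies h H π (ℓ i) i (mroot h H d ℓ)
  | 0, ℓ, i => ⟨Fin.elim0, by
    rw [show i = ⟨0, by positivity⟩ from Fin.ext (Nat.lt_one_iff.mp i.isLt)]; rfl⟩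
  | d + 1, ℓ, i => by
    cases hb : i.val.testBit d with
    | false =>
      obtain ⟨π, hπ⟩ := exists_verifies_mroot d (half0 ℓ) (halfIndex i)
      refine ⟨Fin.snoc π (mroot h H d (half1 ℓ)), ?_⟩
      rw [Verifies, vfold_snoc, hb, if_neg Bool.false_ne_true, ← half0_halfIndex ℓ i hb]
      exact congrArg (H · _) hπ
    | true =>
      obtain ⟨π, hπ⟩ := exists_verifies_mroot d (half1 ℓ) (halfIndex i)
      refine ⟨Fin.snoc π (mroot h H d (half0 ℓ)), ?_⟩
      rw [Verifies, vfold_snoc, hb, if_pos rfl, ← half1_halfIndex ℓ i hb]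
      exact congrArg (H _ ·) hπ

end

/-- Evidence for the Integrity 2 fraud-proof: an element occurring both in the current
batch and in a previous batch can be exhibited by two verifying Merkle membership proofs
against the two posted roots. -/
theorem integrity2_evidence (h : α → β) (H : β → β → β)
    {d d' : ℕ} (ℓ : Fin (2 ^ d) → α) (ℓ' : Fin (2 ^ d') → α) (e : α)
    (he : (∃ i, ℓ i = e) ∧ (∃ j, ℓ' j = e)) :
    ∃ (i : Fin (2 ^ d)) (j : Fin (2 ^ d')) (π : Fin d → β) (π' : Fin d' → β),
      Verifies h H π e i (mroot h H d ℓ) ∧ Verifies h H π' e j (mroot h H d' ℓ') := by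
  obtain ⟨⟨i, rfl⟩, ⟨j, hj⟩⟩ := he
  obtain ⟨π, hπ⟩ := exists_verifies_mroot h H d ℓ i
  obtain ⟨π', hπ'⟩ := exists_verifies_mroot h H d' ℓ' j
  exact ⟨i, j, π, π', hπ, hj ▸ hπ'⟩
end
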